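/- For all integers n ≥ 1 and 1 ≤ d ≤ n there exists a set of binary words of length 2n, each having 1-bounded running digital sum (1-BRDS), with pairwise Hamming distances at least 2d, whose size is at least 2^n / (∑_{j=0}^{d−1} C(n,j)). -/

import Mathlib

/-- The four-letter DNA alphabet. -/
inductive DNA | A | T | G | C
deriving DecidableEq

/-- Hamming distance between two words (of equal length) given as lists. -/
def hammingD {α : Type*} [DecidableEq α] (x y : List α) : ℕ :=
  (x.zip y).countP (fun p => decide (p.1 ≠ p.2))

/-- A binary word has `D`-bounded running digital sum if in every prefix the
numbers of ones and zeros differ by at most `D`. -/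
def brds (D : ℕ) (w : List Bool) : Prop :=
  ∀ k ≤ w.length,
    (((w.take k).count true : ℤ) - ((w.take k).count false : ℤ)).natAbs ≤ D

/-- The letters `G`, `C` of the DNA alphabet. -/
def isGC : DNA → Bool
  | DNA.G => true
  | DNA.C => true
  | _ => false

/-- A DNA word is `D`-GC-prefix-balanced if in every prefix the number of
letters from {G,C} and the number of letters from {A,T} differ by at most `D`. -/
def gcpb (D : ℕ) (w : List DNA) : Prop :=
  ∀ k ≤ w.length,
    (((w.take k).countP isGC : ℤ) - ((w.take k).countP (fun c => !(isGC c)) : ℤ)).natAbs ≤ D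

/-- A word is self-uncorrelated if no proper nonempty prefix equals the suffix
of the same length. -/
def selfUncorr {α : Type*} (w : List α) : Prop :=
  ∀ k, 1 ≤ k → k ≤ w.length - 1 → w.take k ≠ w.drop (w.length - k)

/-- A set of words is mutually uncorrelated if every word is self-uncorrelated
and for every ordered pair of distinct words `x`, `y` no nonempty prefix of `y`
equals a suffix of `x` of the same length. -/
def mutUncorr {α : Type*} (S : Set (List α)) : Prop :=
  (∀ w ∈ S, selfUncorr w) ∧
  ∀ x ∈ S, ∀ y ∈ S, x ≠ y →
    ∀ k, 1 ≤ k → k ≤ x.length → y.take k ≠ x.drop (x.length - k)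

/-- A Dyck word: equal numbers of ones and zeros, and every prefix has at least
as many ones as zeros. -/
def isDyck (w : List Bool) : Prop :=
  w.count true = w.count false ∧
  ∀ k ≤ w.length, (w.take k).count false ≤ (w.take k).count true

/-- The height of a (Dyck) word is at most `D`: in every prefix the number of
ones exceeds the number of zeros by at most `D`. -/
def heightLe (D : ℕ) (w : List Bool) : Prop :=
  ∀ k ≤ w.length, ((w.take k).count true : ℤ) - ((w.take k).count false : ℤ) ≤ (D : ℤ)

/-!
A maximal binary code of length `n` and minimum distance `d` covers `{0,1}^n` by Hamming balls of
radius `d - 1`, each of size at most `∑_{j<d} C(n,j)`: this is the Gilbert–Varshamov bound.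
The Manchester encoding `b ↦ b (¬b)` doubles lengths and Hamming distances, and every prefix of
an encoded word has running digital sum `0` or `±1`.
-/

open Finset

section GilbertVarshamov

variable {ι : Type*} [Fintype ι]

theorem exists_code_forall_exists_hammingDist_lt {β : ι → Type*} [∀ i, Fintype (β i)]
    [∀ i, DecidableEq (β i)] {d : ℕ} (hd : 1 ≤ d) :
    ∃ C : Finset (∀ i, β i), (∀ x ∈ C, ∀ y ∈ C, x ≠ y → d ≤ hammingDist x y) ∧
      ∀ y, ∃ c ∈ C, hammingDist c y < d := by
  classical
  obtain ⟨C, hC, hmax⟩ := exists_max_image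
    {C : Finset (∀ i, β i) | ∀ x ∈ C, ∀ y ∈ C, x ≠ y → d ≤ hammingDist x y} card ⟨∅, by simp⟩
  rw [mem_filter] at hC
  refine ⟨C, hC.2, fun y => ?_⟩
  by_contra! hfar
  have hy : y ∉ C := fun hy => by simpa using (hfar y hy).trans_lt' hd
  have hcode : ∀ x ∈ insert y C, ∀ z ∈ insert y C, x ≠ z → d ≤ hammingDist x z := by
    simp only [mem_insert]
    rintro x (rfl | hx) z (rfl | hz) hxz
    · exact absurd rfl hxz
    · exact hammingDist_comm x z ▸ hfar z hz
    · exact hfar x hx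
    · exact hC.2 x hx z hz hxz
  have := hmax (insert y C) (mem_filter.2 ⟨mem_univ _, hcode⟩)
  rw [card_insert_of_notMem hy] at this
  omega

theorem card_hammingDist_lt_le [DecidableEq ι] (c : ι → Bool) (d : ℕ) :
    #{y | hammingDist c y < d} ≤ ∑ j ∈ range d, (Fintype.card ι).choose j := by
  let balls := (range d).biUnion fun j => powersetCard j (univ : Finset ι)
  have hballs : #balls = ∑ j ∈ range d, (Fintype.card ι).choose j := by
    rw [card_biUnion fun i _ j _ hij => pairwise_disjoint_powersetCard _ hij]
    simp
  rw [← hballs]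
  refine card_le_card_of_injOn (fun y => ({i | c i ≠ y i} : Finset ι)) ?_ ?_
  · intro y hy
    simpa [balls, hammingDist] using hy
  · intro y₁ _ y₂ _ h
    funext i
    have hi := Finset.ext_iff.1 h i
    simp only [mem_filter, mem_univ, true_and] at hi
    revert hi
    cases c i <;> cases y₁ i <;> cases y₂ i <;> simp

theorem exists_binary_code_two_pow_le [DecidableEq ι] {d : ℕ} (hd : 1 ≤ d) :
    ∃ C : Finset (ι → Bool), (∀ x ∈ C, ∀ y ∈ C, x ≠ y → d ≤ hammingDist x y) ∧
      2 ^ Fintype.card ι ≤ #C * ∑ j ∈ range d, (Fintype.card ι).choose j := by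
  classical
  obtain ⟨C, hcode, hcover⟩ := exists_code_forall_exists_hammingDist_lt (β := fun _ : ι => Bool) hd
  refine ⟨C, hcode, ?_⟩
  calc 2 ^ Fintype.card ι = #(univ : Finset (ι → Bool)) := by simp
    _ ≤ #(C.biUnion fun c => {y | hammingDist c y < d}) := card_le_card fun y _ => by
        obtain ⟨c, hc, hcy⟩ := hcover y
        exact mem_biUnion.2 ⟨c, hc, by simpa using hcy⟩
    _ ≤ ∑ c ∈ C, #{y : ι → Bool | hammingDist c y < d} := card_biUnion_le
    _ ≤ ∑ _c ∈ C, ∑ j ∈ range d, (Fintype.card ι).choose j :=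
        sum_le_sum fun c _ => card_hammingDist_lt_le c d
    _ = #C * ∑ j ∈ range d, (Fintype.card ι).choose j := by rw [sum_const, smul_eq_mul]

end GilbertVarshamov

theorem hammingD_cons_cons {α : Type*} [DecidableEq α] (a b : α) (x y : List α) :
    hammingD (a :: x) (b :: y) = hammingD x y + if a ≠ b then 1 else 0 := by
  simp [hammingD, List.countP_cons]

theorem hammingD_ofFn {α : Type*} [DecidableEq α] :
    ∀ {n : ℕ} (x y : Fin n → α), hammingD (List.ofFn x) (List.ofFn y) = hammingDist x y
  | 0, _, _ => by simp [hammingD, hammingDist]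
  | n + 1, x, y => by
    rw [List.ofFn_succ, List.ofFn_succ, hammingD_cons_cons, hammingD_ofFn, hammingDist,
      hammingDist, card_filter, card_filter, Fin.sum_univ_succ, add_comm]

def manchester : List Bool → List Bool
  | [] => []
  | b :: l => b :: (!b) :: manchester l

theorem length_manchester (l : List Bool) : (manchester l).length = 2 * l.length := by
  induction l with
  | nil => rfl
  | cons b l ih => simp only [manchester, List.length_cons, ih]; ring

theorem manchester_injective : Function.Injective manchester := by
  intro l₁ l₂ h
  induction l₁ generalizing l₂ with
  | nil => cases l₂ <;> simp_all [manchester]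
  | cons b l ih =>
    cases l₂ with
    | nil => simp [manchester] at h
    | cons c m =>
      simp only [manchester, List.cons.injEq] at h
      rw [h.1, ih h.2.2]

theorem hammingD_manchester {l₁ l₂ : List Bool} (h : l₁.length = l₂.length) :
    hammingD (manchester l₁) (manchester l₂) = 2 * hammingD l₁ l₂ := by
  induction l₁ generalizing l₂ with
  | nil => cases l₂ <;> simp_all [manchester, hammingD]
  | cons b l ih =>
    cases l₂ with
    | nil => simp at h
    | cons c m =>
      simp only [manchester, hammingD_cons_cons, ih (Nat.succ.inj h)]
      cases b <;> cases c <;> simp <;> ring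

theorem count_cons_not_cons (b c : Bool) (w : List Bool) :
    (b :: (!b) :: w).count c = w.count c + 1 := by
  cases b <;> cases c <;> simp

theorem brds_manchester (l : List Bool) : brds 1 (manchester l) := by
  induction l with
  | nil => simp [brds, manchester]
  | cons b l ih =>
    rintro (_ | _ | k) hk
    · simp
    · cases b <;> simp [manchester]
    · have hk' : k ≤ (manchester l).length := by
        simp only [manchester, List.length_cons] at hk; omega
      have := ih k hk'
      simp only [manchester, List.take_succ_cons, count_cons_not_cons]
      omega

theorem stmt1_general (n d : ℕ) (hd : 1 ≤ d) :
    ∃ C : Finset (List Bool), (∀ w ∈ C, w.length = 2 * n) ∧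
      (∀ w ∈ C, brds 1 w) ∧
      (∀ x ∈ C, ∀ y ∈ C, x ≠ y → 2 * d ≤ hammingD x y) ∧
      (2 ^ n : ℝ) / (∑ j ∈ Finset.range d, (n.choose j : ℝ)) ≤ (C.card : ℝ) := by
  classical
  obtain ⟨C, hcode, hcard⟩ := exists_binary_code_two_pow_le (ι := Fin n) hd
  rw [Fintype.card_fin] at hcard
  let encode (x : Fin n → Bool) : List Bool := manchester (List.ofFn x)
  have hencode : Function.Injective encode := manchester_injective.comp List.ofFn_injective
  refine ⟨C.image encode, ?_, ?_, ?_, ?_⟩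
  · simp [encode, length_manchester]
  · simp [encode, brds_manchester]
  · simp only [mem_image]
    rintro _ ⟨x, hx, rfl⟩ _ ⟨y, hy, rfl⟩ hxy
    rw [hammingD_manchester (by simp), hammingD_ofFn]
    exact Nat.mul_le_mul_left 2 (hcode x hx y hy (ne_of_apply_ne encode hxy))
  · have hball : 0 < ∑ j ∈ range d, n.choose j :=
      Nat.pos_of_mul_pos_left ((Nat.two_pow_pos n).trans_le hcard)
    rw [card_image_of_injective _ hencode, div_le_iff₀ (by exact_mod_cast hball)]
    exact_mod_cast hcard

/-- there exists a 1-BRDS set of binary words of length `2n` with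
pairwise Hamming distance at least `2d` of size at least
`2^n / (∑_{j=0}^{d-1} C(n,j))`. -/
theorem stmt1 (n d : ℕ) (hn : 1 ≤ n) (hd : 1 ≤ d) (hdn : d ≤ n) :
    ∃ C : Finset (List Bool), (∀ w ∈ C, w.length = 2 * n) ∧
      (∀ w ∈ C, brds 1 w) ∧
      (∀ x ∈ C, ∀ y ∈ C, x ≠ y → 2 * d ≤ hammingD x y) ∧
      (2 ^ n : ℝ) / (∑ j ∈ Finset.range d, (n.choose j : ℝ)) ≤ (C.card : ℝ) :=
  stmt1_general n d hd
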